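/- Let 0 < α_min ≤ α_max < 1. Then there exists a constant C ∈ (0,∞), independent of τ, such that for every τ ∈ (0,1], every α ∈ [α_min, α_max], and every σ ∈ [1/2, 1], the function a_0(α,σ;τ) := (τ^{−α}/Γ(2−α))·( ((1+σ)^{2−α} − σ^{2−α})/(2−α) − ((1+σ)^{1−α} − σ^{1−α})/2 ) satisfies |∂_α a_0(α,σ;τ)| + |∂_σ a_0(α,σ;τ)| ≤ C·(1 + |log τ|)·τ^{−α_max}. -/

import Mathlib

/-!
Write `a0 α σ τ = τ ^ (-α) * g (α, σ)`, where `g` is smooth on a neighbourhood of the compact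
rectangle `[αmin, αmax] × [1/2, 1]` because the reciprocal of Γ is entire. The step `τ` then
enters only through `τ ^ (-α) ≤ τ ^ (-αmax)` (as `τ ≤ 1`) and, after differentiating in `α`,
a factor `log τ`; all other factors are bounded by the bounds of `g` and of its derivative on
the rectangle.
-/

/-- The zeroth normalized weight `a_0(α,σ;τ)` of the second-order approximation of
the Caputo derivative of order `α`, with time step `τ` and intermediate parameter `σ`. -/
noncomputable def a0 (α σ τ : ℝ) : ℝ :=
  τ ^ (-α) / Real.Gamma (2 - α) *
    (((1 + σ) ^ (2 - α) - σ ^ (2 - α)) / (2 - α)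
      - ((1 + σ) ^ (1 - α) - σ ^ (1 - α)) / 2)

open Real Set

theorem Real.contDiff_inv_Gamma {n : WithTop ℕ∞} : ContDiff ℝ n fun x : ℝ => (Gamma x)⁻¹ := by
  have h := (Complex.differentiable_one_div_Gamma.contDiff (n := n)).real_of_complex
  have h_re : (fun x : ℝ => (Complex.Gamma x)⁻¹.re) = fun x => (Gamma x)⁻¹ := by
    ext x; rw [Complex.Gamma_ofReal, ← Complex.ofReal_inv, Complex.ofReal_re]
  rwa [h_re] at h

section PartialDerivatives

variable {𝕜 F : Type*} [NontriviallyNormedField 𝕜] [NormedAddCommGroup F] [NormedSpace 𝕜 F]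
  {g : 𝕜 × 𝕜 → F} {a b : 𝕜}

theorem DifferentiableAt.hasDerivAt_partial_fst (hg : DifferentiableAt 𝕜 g (a, b)) :
    HasDerivAt (fun x => g (x, b)) (fderiv 𝕜 g (a, b) (1, 0)) a :=
  hg.hasFDerivAt.comp_hasDerivAt a ((hasDerivAt_id a).prodMk (hasDerivAt_const a b))

theorem DifferentiableAt.hasDerivAt_partial_snd (hg : DifferentiableAt 𝕜 g (a, b)) :
    HasDerivAt (fun y => g (a, y)) (fderiv 𝕜 g (a, b) (0, 1)) b :=
  hg.hasFDerivAt.comp_hasDerivAt b ((hasDerivAt_const b a).prodMk (hasDerivAt_id b))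

end PartialDerivatives

section RpowNegMul

variable {g : ℝ × ℝ → ℝ} {a b τ : ℝ}

theorem hasDerivAt_rpow_neg_mul_partial_fst (hτ : 0 < τ) (hg : DifferentiableAt ℝ g (a, b)) :
    HasDerivAt (fun x => τ ^ (-x) * g (x, b))
      (τ ^ (-a) * (fderiv ℝ g (a, b) (1, 0) - log τ * g (a, b))) a :=
  (((hasDerivAt_neg a).const_rpow hτ).mul hg.hasDerivAt_partial_fst).congr_deriv (by ring)

theorem abs_deriv_rpow_neg_mul_partial_le (hτ : 0 < τ) (hg : DifferentiableAt ℝ g (a, b)) :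
    |deriv (fun x => τ ^ (-x) * g (x, b)) a| + |deriv (fun y => τ ^ (-a) * g (a, y)) b| ≤
      τ ^ (-a) * (|log τ| * |g (a, b)| + 2 * ‖fderiv ℝ g (a, b)‖) := by
  have h_unit : ∀ v : ℝ × ℝ, ‖v‖ = 1 → |fderiv ℝ g (a, b) v| ≤ ‖fderiv ℝ g (a, b)‖ := fun v hv =>
    ((fderiv ℝ g (a, b)).le_opNorm v).trans_eq (by rw [hv, mul_one])
  have h_fst := h_unit (1, 0) (by simp [Prod.norm_def])
  have h_snd := h_unit (0, 1) (by simp [Prod.norm_def])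
  rw [(hasDerivAt_rpow_neg_mul_partial_fst hτ hg).deriv,
    (hg.hasDerivAt_partial_snd.const_mul (τ ^ (-a))).deriv, abs_mul, abs_mul,
    abs_of_pos (rpow_pos_of_pos hτ _), ← mul_add]
  refine mul_le_mul_of_nonneg_left ?_ (rpow_pos_of_pos hτ _).le
  calc |fderiv ℝ g (a, b) (1, 0) - log τ * g (a, b)| + |fderiv ℝ g (a, b) (0, 1)|
      ≤ |fderiv ℝ g (a, b) (1, 0)| + |log τ| * |g (a, b)| + |fderiv ℝ g (a, b) (0, 1)| := by
        gcongr; exact (abs_sub _ _).trans_eq (by rw [abs_mul])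
    _ ≤ |log τ| * |g (a, b)| + 2 * ‖fderiv ℝ g (a, b)‖ := by linarith

end RpowNegMul

noncomputable def a0Profile (p : ℝ × ℝ) : ℝ :=
  (((1 + p.2) ^ (2 - p.1) - p.2 ^ (2 - p.1)) / (2 - p.1)
    - ((1 + p.2) ^ (1 - p.1) - p.2 ^ (1 - p.1)) / 2) * (Gamma (2 - p.1))⁻¹

theorem a0_eq_rpow_mul_a0Profile (α σ τ : ℝ) : a0 α σ τ = τ ^ (-α) * a0Profile (α, σ) := by
  rw [a0, a0Profile]; ring

theorem contDiffOn_a0Profile {n : WithTop ℕ∞} :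
    ContDiffOn ℝ n a0Profile {p | p.1 < 2 ∧ 0 < p.2} := by
  rintro ⟨α, σ⟩ ⟨hα, hσ⟩
  refine ContDiffAt.contDiffWithinAt ?_
  have hfst : ContDiffAt ℝ n (fun p : ℝ × ℝ => p.1) (α, σ) := contDiffAt_fst
  have hsnd : ContDiffAt ℝ n (fun p : ℝ × ℝ => p.2) (α, σ) := contDiffAt_snd
  have hpow : ∀ c : ℝ, ContDiffAt ℝ n (fun p : ℝ × ℝ => (1 + p.2) ^ (c - p.1) - p.2 ^ (c - p.1))
      (α, σ) := fun c =>
    ((contDiffAt_const.add hsnd).rpow (contDiffAt_const.sub hfst) (by dsimp only; linarith)).sub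
      (hsnd.rpow (contDiffAt_const.sub hfst) hσ.ne')
  exact (((hpow 2).div (contDiffAt_const.sub hfst) (by dsimp only; linarith)).sub
    ((hpow 1).div_const 2)).mul (contDiff_inv_Gamma.contDiffAt.comp _ (contDiffAt_const.sub hfst))

theorem stmt_7_general (αmin αmax : ℝ)
    (h3 : αmax < 1) :
    ∃ C > (0 : ℝ), ∀ τ ∈ Set.Ioc (0 : ℝ) 1, ∀ α ∈ Set.Icc αmin αmax,
      ∀ σ ∈ Set.Icc (1/2 : ℝ) 1,
        |deriv (fun a => a0 a σ τ) α| + |deriv (fun s => a0 α s τ) σ| ≤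
          C * (1 + |Real.log τ|) * τ ^ (-αmax) := by
  set U : Set (ℝ × ℝ) := {p | p.1 < 2 ∧ 0 < p.2}
  set K : Set (ℝ × ℝ) := Icc αmin αmax ×ˢ Icc (1/2) 1
  have hU : IsOpen U :=
    (isOpen_lt continuous_fst continuous_const).inter (isOpen_lt continuous_const continuous_snd)
  have hKU : K ⊆ U := fun p hp => ⟨by linarith [hp.1.2], by linarith [hp.2.1]⟩
  have hK : IsCompact K := isCompact_Icc.prod isCompact_Icc
  have h_smooth : ContDiffOn ℝ 1 a0Profile U := contDiffOn_a0Profile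
  obtain ⟨G, hG0, hG⟩ := (hK.image_of_continuousOn
    (h_smooth.continuousOn.mono hKU)).isBounded.exists_pos_norm_le
  obtain ⟨D, hD0, hD⟩ := (hK.image_of_continuousOn
    ((h_smooth.continuousOn_fderiv_of_isOpen hU le_rfl).mono hKU)).isBounded.exists_pos_norm_le
  refine ⟨G + 2 * D, by positivity, ?_⟩
  rintro τ ⟨hτ0, hτ1⟩ α hα σ hσ
  have hp : (α, σ) ∈ K := ⟨hα, hσ⟩
  have h_diff : DifferentiableAt ℝ a0Profile (α, σ) :=
    (h_smooth.contDiffAt (hU.mem_nhds (hKU hp))).differentiableAt one_ne_zero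
  have hτα : τ ^ (-α) ≤ τ ^ (-αmax) := rpow_le_rpow_of_exponent_ge hτ0 hτ1 (by linarith [hα.2])
  simp only [a0_eq_rpow_mul_a0Profile]
  calc _ ≤ τ ^ (-α) * (|log τ| * |a0Profile (α, σ)| + 2 * ‖fderiv ℝ a0Profile (α, σ)‖) :=
        abs_deriv_rpow_neg_mul_partial_le hτ0 h_diff
    _ ≤ τ ^ (-αmax) * (|log τ| * G + 2 * D) := by
        gcongr
        · exact hG _ (mem_image_of_mem _ hp)
        · exact hD _ (mem_image_of_mem _ hp)
    _ ≤ (G + 2 * D) * (1 + |log τ|) * τ ^ (-αmax) := by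
        rw [mul_comm]
        gcongr
        nlinarith [abs_nonneg (log τ)]

/-- the partial derivatives of `a_0` with respect to α and σ are
bounded by C·(1 + |log τ|)·τ^{−α_max}, uniformly in τ ∈ (0,1], α ∈ [α_min,α_max],
σ ∈ [1/2,1]. -/
theorem stmt_7 (αmin αmax : ℝ)
    (h1 : 0 < αmin) (h2 : αmin ≤ αmax) (h3 : αmax < 1) :
    ∃ C > (0 : ℝ), ∀ τ ∈ Set.Ioc (0 : ℝ) 1, ∀ α ∈ Set.Icc αmin αmax,
      ∀ σ ∈ Set.Icc (1/2 : ℝ) 1,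
        |deriv (fun a => a0 a σ τ) α| + |deriv (fun s => a0 α s τ) σ| ≤
          C * (1 + |Real.log τ|) * τ ^ (-αmax) :=
  stmt_7_general αmin αmax h3
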